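/- Consider a pairwise MRF with nonnegative potentials on a graph G = (V,E) with max degree d*, and suppose |B| random removed edges satisfy Pr(e ∈ B) ≤ ε for each e. Then the randomized estimates satisfy: with log Ẑ_LB ≤ log Z ≤ log Ẑ_UB always, and E[log Ẑ_UB] ≤ (1 + ε(d*+1)) log Z and E[log Ẑ_LB] ≥ (1 − ε(d*+1)) log Z. -/

import Mathlib

open scoped BigOperators

namespace VizingAux
variable {V : Type*} [Fintype V] [DecidableEq V]

structure PC (adj : V → V → Prop) (N : ℕ) where
  c : V → V → Option (Fin N)
  symm : ∀ u v, c u v = c v u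
  supp : ∀ u v, c u v ≠ none → adj u v
  proper : ∀ u v w, c u v ≠ none → c u v = c u w → v = w

variable {adj : V → V → Prop} [DecidableRel adj] {N : ℕ}
set_option linter.unusedSectionVars false

def usedAt (P : PC adj N) (v : V) : Finset (Fin N) :=
  Finset.univ.filter (fun γ => ∃ u, P.c v u = some γ)

lemma mem_usedAt {P : PC adj N} {v : V} {γ : Fin N} :
    γ ∈ usedAt P v ↔ ∃ u, P.c v u = some γ := by simp [usedAt]

lemma card_usedAt_le (P : PC adj N) (v : V) (d₀ : Fin N) :
    (usedAt P v).card ≤ (Finset.univ.filter (fun u => P.c v u ≠ none)).card := by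
  classical
  have hsub : usedAt P v ⊆
      (Finset.univ.filter (fun u => P.c v u ≠ none)).image (fun u => (P.c v u).getD d₀) := by
    intro γ hγ
    rw [mem_usedAt] at hγ
    obtain ⟨u, hu⟩ := hγ
    apply Finset.mem_image.2
    exact ⟨u, by simp [hu], by simp [hu]⟩
  exact le_trans (Finset.card_le_card hsub) Finset.card_image_le

lemma colored_card_le (P : PC adj N) (v : V) :
    (Finset.univ.filter (fun u => P.c v u ≠ none)).card ≤
      (Finset.univ.filter (fun u => adj v u)).card := by
  apply Finset.card_le_card
  intro u hu
  simp only [Finset.mem_filter, Finset.mem_univ, true_and] at hu ⊢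
  exact P.supp v u hu

lemma exists_free (P : PC adj N) (v : V)
    (h : (Finset.univ.filter (fun u => adj v u)).card < N) :
    ∃ γ : Fin N, γ ∉ usedAt P v := by
  classical
  have hN : 0 < N := lt_of_le_of_lt (Nat.zero_le _) h
  have hcard : (usedAt P v).card < Fintype.card (Fin N) := by
    rw [Fintype.card_fin]
    exact lt_of_le_of_lt (le_trans (card_usedAt_le P v ⟨0, hN⟩) (colored_card_le P v)) h
  have : usedAt P v ≠ Finset.univ := by
    intro h'
    rw [h', Finset.card_univ] at hcard
    exact lt_irrefl _ hcard
  obtain ⟨γ, _, hγ⟩ := Finset.exists_of_ssubset (Finset.ssubset_univ_iff.2 this)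
  exact ⟨γ, hγ⟩


/-- Color (or recolor) edge `(x,y)` with color `β`. -/
def setEdge (P : PC adj N) (hsym : ∀ u v, adj u v → adj v u)
    (x y : V) (β : Fin N)
    (hadj : adj x y) (hxy : x ≠ y)
    (hx : β ∉ usedAt P x) (hy : β ∉ usedAt P y) : PC adj N where
  c := fun u v => if (u = x ∧ v = y) ∨ (u = y ∧ v = x) then some β else P.c u v
  symm := by
    intro u v
    by_cases h : (u = x ∧ v = y) ∨ (u = y ∧ v = x)
    · have h' : (v = x ∧ u = y) ∨ (v = y ∧ u = x) := by tauto
      simp [h, h']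
    · have h' : ¬((v = x ∧ u = y) ∨ (v = y ∧ u = x)) := by tauto
      simp [h, h', P.symm u v]
  supp := by
    intro u v h
    by_cases hc : (u = x ∧ v = y) ∨ (u = y ∧ v = x)
    · rcases hc with ⟨h1, h2⟩ | ⟨h1, h2⟩
      · rw [h1, h2]; exact hadj
      · rw [h1, h2]; exact hsym x y hadj
    · simp only [if_neg hc] at h
      exact P.supp u v h
  proper := by
    intro u v w hne heq
    by_cases h1 : (u = x ∧ v = y) ∨ (u = y ∧ v = x) <;>
      by_cases h2 : (u = x ∧ w = y) ∨ (u = y ∧ w = x)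
    · -- both are the new edge: v = w
      rcases h1 with ⟨ha, hb⟩ | ⟨ha, hb⟩ <;> rcases h2 with ⟨hc, hd⟩ | ⟨hc, hd⟩ <;>
        simp_all
    · -- edge uv is new (color β), uw is old: old color β at u ∈ {x,y} contradicts free
      exfalso
      rw [if_pos h1, if_neg h2] at heq
      have : P.c u w = some β := heq.symm
      rcases h1 with ⟨ha, hb⟩ | ⟨ha, hb⟩
      · exact hx (mem_usedAt.2 ⟨w, by rwa [← ha]⟩)
      · exact hy (mem_usedAt.2 ⟨w, by rwa [← ha]⟩)
    · exfalso
      rw [if_neg h1] at heq hne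
      rw [if_pos h2] at heq
      have : P.c u v = some β := heq
      rcases h2 with ⟨ha, hb⟩ | ⟨ha, hb⟩
      · exact hx (mem_usedAt.2 ⟨v, by rwa [← ha]⟩)
      · exact hy (mem_usedAt.2 ⟨v, by rwa [← ha]⟩)
    · rw [if_neg h1] at heq hne
      rw [if_neg h2] at heq
      exact P.proper u v w hne heq

section SetEdgeFacts
variable {P : PC adj N} {hsym : ∀ u v, adj u v → adj v u} {x y : V} {β : Fin N}
  {hadj : adj x y} {hxy : x ≠ y} {hx : β ∉ usedAt P x} {hy : β ∉ usedAt P y}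

lemma setEdge_c (u v : V) :
    (setEdge P hsym x y β hadj hxy hx hy).c u v =
      if (u = x ∧ v = y) ∨ (u = y ∧ v = x) then some β else P.c u v := rfl

lemma setEdge_c_of_ne {u v : V} (h : ¬((u = x ∧ v = y) ∨ (u = y ∧ v = x))) :
    (setEdge P hsym x y β hadj hxy hx hy).c u v = P.c u v := by
  rw [setEdge_c, if_neg h]

lemma setEdge_preserves {u v : V} (h : P.c u v ≠ none) :
    (setEdge P hsym x y β hadj hxy hx hy).c u v ≠ none := by
  rw [setEdge_c]
  by_cases hc : (u = x ∧ v = y) ∨ (u = y ∧ v = x)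
  · simp [hc]
  · simpa [hc] using h

lemma setEdge_colored : (setEdge P hsym x y β hadj hxy hx hy).c x y = some β := by
  rw [setEdge_c, if_pos (Or.inl ⟨rfl, rfl⟩)]

lemma usedAt_setEdge_other {v : V} (hvx : v ≠ x) (hvy : v ≠ y) :
    usedAt (setEdge P hsym x y β hadj hxy hx hy) v = usedAt P v := by
  apply Finset.ext
  intro γ
  rw [mem_usedAt, mem_usedAt]
  constructor <;> rintro ⟨u, hu⟩ <;> refine ⟨u, ?_⟩
  · rwa [setEdge_c_of_ne (by tauto)] at hu
  · rwa [setEdge_c_of_ne (by tauto)]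

/-- After recoloring edge `(x,y)` from `γ'` to `β`, the old color `γ'` is free at `x`. -/
lemma setEdge_old_free {γ' : Fin N} (hold : P.c x y = some γ') :
    γ' ∉ usedAt (setEdge P hsym x y β hadj hxy hx hy) x := by
  rw [mem_usedAt]
  rintro ⟨u, hu⟩
  rw [setEdge_c] at hu
  by_cases hc : (x = x ∧ u = y) ∨ (x = y ∧ u = x)
  · rw [if_pos hc] at hu
    have hβ : β = γ' := by simpa using hu
    exact hx (hβ ▸ mem_usedAt.2 ⟨y, hold⟩)
  · rw [if_neg hc] at hu
    have : u = y := P.proper x u y (by simp [hu]) (by rw [hu, hold])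
    exact hc (Or.inl ⟨rfl, this⟩)

/-- Colors of other edges at `x` are unchanged. -/
lemma setEdge_c_x {u : V} (hu : u ≠ y) :
    (setEdge P hsym x y β hadj hxy hx hy).c x u = P.c x u := by
  apply setEdge_c_of_ne
  rintro (⟨-, h⟩ | ⟨h, -⟩)
  · exact hu h
  · exact hxy h

end SetEdgeFacts

section Flip
variable (P : PC adj N) (α β : Fin N) (x : V)

def stepAB (u v : V) : Prop := P.c u v = some α ∨ P.c u v = some β

instance : DecidableRel (stepAB P α β) := fun _ _ => inferInstanceAs (Decidable (_ ∨ _))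

lemma stepAB_symm {u v : V} (h : stepAB P α β u v) : stepAB P α β v u := by
  rwa [stepAB, P.symm v u]

def gAB : SimpleGraph V where
  Adj u v := u ≠ v ∧ stepAB P α β u v
  symm := ⟨fun u v h => ⟨h.1.symm, stepAB_symm P α β h.2⟩⟩
  loopless := ⟨fun v h => h.1 rfl⟩

open Classical in
instance : DecidableRel (gAB P α β).Adj :=
  fun u v => inferInstanceAs (Decidable (u ≠ v ∧ stepAB P α β u v))

noncomputable def Rset : Finset V :=
  Finset.univ.filter (fun v => (gAB P α β).Reachable x v)

open Classical in
lemma mem_Rset {v : V} : v ∈ Rset P α β x ↔ (gAB P α β).Reachable x v := by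
  simp [Rset]

lemma x_mem_Rset : x ∈ Rset P α β x := (mem_Rset P α β x).2 (SimpleGraph.Reachable.refl x)

lemma Rset_closed {u v : V} (hu : u ∈ Rset P α β x) (h : stepAB P α β u v) :
    v ∈ Rset P α β x := by
  by_cases huv : u = v
  · rwa [← huv]
  · exact (mem_Rset P α β x).2
      (((mem_Rset P α β x).1 hu).trans (SimpleGraph.Adj.reachable ⟨huv, h⟩))

lemma map_swap_of_not_step {u v : V} (h : ¬ stepAB P α β u v) :
    (P.c u v).map (Equiv.swap α β) = P.c u v := by
  rw [stepAB] at h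
  push_neg at h
  cases hc : P.c u v with
  | none => simp
  | some γ =>
    rw [hc] at h
    have h1 : γ ≠ α := fun he => h.1 (by rw [he])
    have h2 : γ ≠ β := fun he => h.2 (by rw [he])
    simp [Equiv.swap_apply_of_ne_of_ne h1 h2]

noncomputable def flip : PC adj N where
  c := fun u v => if u ∈ Rset P α β x then (P.c u v).map (Equiv.swap α β) else P.c u v
  symm := by
    intro u v
    by_cases hs : stepAB P α β u v
    · have hs' : stepAB P α β v u := stepAB_symm P α β hs
      have hiff : u ∈ Rset P α β x ↔ v ∈ Rset P α β x :=
        ⟨fun h => Rset_closed P α β x h hs, fun h => Rset_closed P α β x h hs'⟩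
      by_cases hu : u ∈ Rset P α β x
      · rw [if_pos hu, if_pos (hiff.1 hu), P.symm u v]
      · rw [if_neg hu, if_neg (fun h => hu (hiff.2 h)), P.symm u v]
    · have hs' : ¬ stepAB P α β v u := fun h => hs (stepAB_symm P α β h)
      have e1 := map_swap_of_not_step P α β hs
      have e2 := map_swap_of_not_step P α β hs'
      simp only [e1, e2, ite_self]
      exact P.symm u v
  supp := by
    intro u v h
    apply P.supp u v
    by_cases hu : u ∈ Rset P α β x
    · rw [if_pos hu] at h
      intro hn; rw [hn] at h; exact h rfl
    · rwa [if_neg hu] at h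
  proper := by
    intro u v w hne heq
    by_cases hu : u ∈ Rset P α β x
    · simp only [if_pos hu] at hne heq
      have hinj := Option.map_injective (Equiv.swap α β).injective
      refine P.proper u v w ?_ (hinj heq)
      intro hn; rw [hn] at hne; exact hne rfl
    · simp only [if_neg hu] at hne heq
      exact P.proper u v w hne heq

lemma flip_c (u v : V) : (flip P α β x).c u v =
    if u ∈ Rset P α β x then (P.c u v).map (Equiv.swap α β) else P.c u v := rfl

lemma flip_none_iff (u v : V) : (flip P α β x).c u v = none ↔ P.c u v = none := by
  rw [flip_c]
  by_cases hu : u ∈ Rset P α β x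
  · rw [if_pos hu]; cases P.c u v <;> simp
  · rw [if_neg hu]

lemma usedAt_flip_not_mem {v : V} (hv : v ∉ Rset P α β x) :
    usedAt (flip P α β x) v = usedAt P v := by
  apply Finset.ext; intro γ
  rw [mem_usedAt, mem_usedAt]
  constructor <;> rintro ⟨u, hu⟩ <;> exact ⟨u, by
    rw [flip_c, if_neg hv] at * ; assumption⟩

lemma usedAt_flip_mem {v : V} (hv : v ∈ Rset P α β x) (γ : Fin N) :
    γ ∈ usedAt (flip P α β x) v ↔ Equiv.swap α β γ ∈ usedAt P v := by
  rw [mem_usedAt, mem_usedAt]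
  constructor <;> rintro ⟨u, hu⟩ <;> refine ⟨u, ?_⟩
  · rw [flip_c, if_pos hv] at hu
    cases hc : P.c v u with
    | none => rw [hc] at hu; simp at hu
    | some δ =>
      rw [hc] at hu
      simp only [Option.map_some] at hu
      have hδ : Equiv.swap α β δ = γ := by simpa using hu
      rw [← hδ, Equiv.swap_apply_self]
  · rw [flip_c, if_pos hv, hu]
    simp

lemma usedAt_flip_offcolor {v : V} {γ : Fin N} (h1 : γ ≠ α) (h2 : γ ≠ β) :
    (γ ∈ usedAt (flip P α β x) v ↔ γ ∈ usedAt P v) := by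
  by_cases hv : v ∈ Rset P α β x
  · rw [usedAt_flip_mem P α β x hv, Equiv.swap_apply_of_ne_of_ne h1 h2]
  · rw [usedAt_flip_not_mem P α β x hv]

def degAB (v : V) : ℕ := (Finset.univ.filter (fun u => stepAB P α β v u)).card

lemma degAB_comm (v : V) : degAB P α β v = degAB P β α v := by
  unfold degAB
  congr 1
  apply Finset.filter_congr
  intro u _
  simp [stepAB, or_comm]

lemma degAB_le_two (v : V) : degAB P α β v ≤ 2 := by
  by_contra h
  push_neg at h
  have h2 : 2 < (Finset.univ.filter (fun u => stepAB P α β v u)).card := h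
  have hmap : ∀ u ∈ Finset.univ.filter (fun u => stepAB P α β v u),
      (decide (P.c v u = some α)) ∈ (Finset.univ : Finset Bool) := fun _ _ => Finset.mem_univ _
  obtain ⟨u, hu, u', hu', hne, heq⟩ :=
    Finset.exists_ne_map_eq_of_card_lt_of_maps_to (by simpa using h2) hmap
  rw [Finset.mem_filter] at hu hu'
  have hcc : P.c v u = P.c v u' := by
    by_cases hb : P.c v u = some α
    · have : decide (P.c v u' = some α) = true := by
        rw [← heq]; simpa using hb
      rw [hb, of_decide_eq_true this]
    · have hb' : P.c v u' ≠ some α := by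
        intro hx'
        have : decide (P.c v u = some α) = true := by
          rw [heq]; simpa using hx'
        exact hb (of_decide_eq_true this)
      rcases hu.2 with h1 | h1
      · exact absurd h1 hb
      rcases hu'.2 with h2' | h2'
      · exact absurd h2' hb'
      rw [h1, h2']
  exact hne (P.proper v u u' (by rcases hu.2 with h1 | h1 <;> simp [h1]) hcc)

lemma degAB_le_one {v : V} (hβ : β ∉ usedAt P v) : degAB P α β v ≤ 1 := by
  apply Finset.card_le_one.2
  intro u hu u' hu'
  rw [Finset.mem_filter] at hu hu'
  have hβ' : ∀ w, P.c v w ≠ some β := by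
    intro w hw
    exact hβ (mem_usedAt.2 ⟨w, hw⟩)
  have h1 : P.c v u = some α := by
    rcases hu.2 with h | h
    · exact h
    · exact absurd h (hβ' u)
  have h2 : P.c v u' = some α := by
    rcases hu'.2 with h | h
    · exact h
    · exact absurd h (hβ' u')
  exact P.proper v u u' (by simp [h1]) (by rw [h1, h2])

lemma degG_le_degAB (v : V) :
    ((Finset.univ.filter (fun u => (gAB P α β).Adj v u)).card) ≤ degAB P α β v := by
  apply Finset.card_le_card
  intro u hu
  rw [Finset.mem_filter] at hu ⊢
  exact ⟨Finset.mem_univ _, hu.2.2⟩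

lemma no_three_ends (w t : V) (hw : w ∈ Rset P α β x) (ht : t ∈ Rset P α β x)
    (hxw : x ≠ w) (hxt : x ≠ t) (hwt : w ≠ t)
    (dx : degAB P α β x ≤ 1) (dw : degAB P α β w ≤ 1) (dt : degAB P α β t ≤ 1) :
    False := by
  classical
  set G := gAB P α β with hG
  set R := Rset P α β x with hR
  have hreach : ∀ v ∈ R, G.Reachable x v := by
    intro v hv; exact (mem_Rset P α β x).1 hv
  have hxR : x ∈ R := x_mem_Rset P α β x
  have hpred : ∀ v ∈ R, v ≠ x → ∃ u, u ∈ R ∧ G.Adj v u ∧ G.dist x u < G.dist x v := by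
    intro v hv hvx
    have hre : G.Reachable x v := hreach v hv
    obtain ⟨p, hp⟩ := hre.exists_walk_length_eq_dist
    obtain ⟨u, ha, q, hq⟩ := SimpleGraph.Walk.exists_eq_cons_of_ne hvx p.reverse
    refine ⟨u, ?_, ha, ?_⟩
    · exact (mem_Rset P α β x).2 q.reverse.reachable
    · have hlen : G.dist x u ≤ q.length := by
        have := SimpleGraph.dist_le q.reverse
        simpa using this
      have h2 : p.reverse.length = q.length + 1 := by rw [hq]; simp
      rw [SimpleGraph.Walk.length_reverse, hp] at h2
      omega
  let fp : V → V := fun v =>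
    if h : ∃ u, u ∈ R ∧ G.Adj v u ∧ G.dist x u < G.dist x v then h.choose else v
  have hfp : ∀ v ∈ R, v ≠ x → fp v ∈ R ∧ G.Adj v (fp v) ∧ G.dist x (fp v) < G.dist x v := by
    intro v hv hvx
    have h := hpred v hv hvx
    simp only [fp, dif_pos h]
    exact h.choose_spec
  let T : Finset (V × V) := Finset.univ.filter (fun p : V × V => p.1 ∈ R ∧ G.Adj p.1 p.2)
  have hinj : 2 * (R.card - 1) ≤ T.card := by
    have hcard : ((R.erase x) ×ˢ (Finset.univ : Finset Bool)).card = 2 * (R.card - 1) := by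
      rw [Finset.card_product, Finset.card_erase_of_mem hxR]
      simp [mul_comm]
    rw [← hcard]
    apply Finset.card_le_card_of_injOn (fun p => if p.2 then (fp p.1, p.1) else (p.1, fp p.1))
    · rintro ⟨v, b⟩ hvb
      rw [Finset.mem_coe, Finset.mem_product] at hvb
      have hvR : v ∈ R := Finset.mem_of_mem_erase hvb.1
      have hvx : v ≠ x := Finset.ne_of_mem_erase hvb.1
      obtain ⟨h1, h2, _⟩ := hfp v hvR hvx
      cases b
      · simp only [Bool.false_eq_true, if_false]
        exact Finset.mem_filter.2 ⟨Finset.mem_univ _, hvR, h2⟩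
      · simp only [if_true]
        exact Finset.mem_filter.2 ⟨Finset.mem_univ _, h1, h2.symm⟩
    · rintro ⟨v, b⟩ hvb ⟨v', b'⟩ hvb' heq
      rw [Finset.mem_coe, Finset.mem_product] at hvb hvb'
      have hv : v ∈ R := Finset.mem_of_mem_erase hvb.1
      have hvx : v ≠ x := Finset.ne_of_mem_erase hvb.1
      have hv' : v' ∈ R := Finset.mem_of_mem_erase hvb'.1
      have hvx' : v' ≠ x := Finset.ne_of_mem_erase hvb'.1
      obtain ⟨-, -, hd⟩ := hfp v hv hvx
      obtain ⟨-, -, hd'⟩ := hfp v' hv' hvx'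
      cases b <;> cases b' <;>
        simp only [Bool.false_eq_true, if_false, if_true, Prod.mk.injEq] at heq
      · exact Prod.ext heq.1 rfl
      · exfalso
        obtain ⟨e1, e2⟩ := heq
        rw [← e1, ← e2] at hd'
        omega
      · exfalso
        obtain ⟨e1, e2⟩ := heq
        rw [← e2, ← e1] at hd'
        omega
      · exact Prod.ext heq.2 rfl
  have hTsum : T.card = ∑ v ∈ R, (Finset.univ.filter (fun u => G.Adj v u)).card := by
    have hT : T = R.biUnion (fun v => (Finset.univ.filter (fun u => G.Adj v u)).image
        (fun u => (v, u))) := by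
      ext ⟨a, b⟩
      simp only [T, Finset.mem_filter, Finset.mem_univ, true_and, Finset.mem_biUnion,
        Finset.mem_image]
      constructor
      · rintro ⟨h1, h2⟩
        exact ⟨a, h1, b, h2, rfl⟩
      · rintro ⟨v, hv, u, hu, heq⟩
        obtain ⟨e1, e2⟩ := Prod.ext_iff.1 heq
        subst e1; subst e2
        exact ⟨hv, hu⟩
    have hdisj : ∀ v ∈ R, ∀ v' ∈ R, v ≠ v' →
        Disjoint ((Finset.univ.filter (fun u => G.Adj v u)).image (fun u => (v, u)))
          ((Finset.univ.filter (fun u => G.Adj v' u)).image (fun u => (v', u))) := by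
      intro v _ v' _ hne
      rw [Finset.disjoint_left]
      rintro ⟨a, b⟩ ha hb
      rw [Finset.mem_image] at ha hb
      obtain ⟨u, _, hequ⟩ := ha
      obtain ⟨u', _, hequ'⟩ := hb
      apply hne
      have e1 : v = a := (Prod.ext_iff.1 hequ).1
      have e2 : v' = a := (Prod.ext_iff.1 hequ').1
      rw [e1, e2]
    rw [hT, Finset.card_biUnion hdisj]
    apply Finset.sum_congr rfl
    intro v _
    apply Finset.card_image_of_injective
    intro u1 u2 h
    exact (Prod.ext_iff.1 h).2
  -- upper bound on the degree sum
  have hdeg2 : ∀ v, (Finset.univ.filter (fun u => G.Adj v u)).card ≤ 2 :=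
    fun v => le_trans (degG_le_degAB P α β v) (degAB_le_two P α β v)
  have hdeg1 : ∀ v, degAB P α β v ≤ 1 →
      (Finset.univ.filter (fun u => G.Adj v u)).card ≤ 1 :=
    fun v h => le_trans (degG_le_degAB P α β v) h
  have hSp : ({x, w, t} : Finset V) ⊆ R := by
    intro v hv
    simp only [Finset.mem_insert, Finset.mem_singleton] at hv
    rcases hv with rfl | rfl | rfl <;> assumption
  have hcard3 : ({x, w, t} : Finset V).card = 3 := by
    rw [Finset.card_insert_of_notMem (by simp [hxw, hxt]),
      Finset.card_insert_of_notMem (by simp [hwt]), Finset.card_singleton]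
  have hsplit := (Finset.sum_sdiff (f := fun v => (Finset.univ.filter
      (fun u => G.Adj v u)).card) hSp).symm
  have hsum1 : ∑ v ∈ ({x, w, t} : Finset V), (Finset.univ.filter
      (fun u => G.Adj v u)).card ≤ 3 := by
    rw [Finset.sum_insert (by simp [hxw, hxt]), Finset.sum_insert (by simp [hwt]),
      Finset.sum_singleton]
    have := hdeg1 x dx
    have := hdeg1 w dw
    have := hdeg1 t dt
    omega
  have hsum2 : ∑ v ∈ R \ ({x, w, t} : Finset V), (Finset.univ.filter
      (fun u => G.Adj v u)).card ≤ 2 * (R.card - 3) := by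
    calc ∑ v ∈ R \ ({x, w, t} : Finset V), (Finset.univ.filter
        (fun u => G.Adj v u)).card ≤ ∑ _v ∈ R \ ({x, w, t} : Finset V), 2 :=
          Finset.sum_le_sum (fun v _ => hdeg2 v)
      _ = 2 * (R \ ({x, w, t} : Finset V)).card := by rw [Finset.sum_const]; ring
      _ = 2 * (R.card - 3) := by rw [Finset.card_sdiff_of_subset hSp, hcard3]
  have hRge : 3 ≤ R.card := hcard3 ▸ Finset.card_le_card hSp
  omega


end Flip
section Fan
set_option linter.unusedSectionVars false

/-- membership-aware chain implication -/
lemma chain'_mem_imp {α' : Type*} {r s : α' → α' → Prop} :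
    ∀ {l : List α'}, List.IsChain r l → (∀ a ∈ l, ∀ b ∈ l, r a b → s a b) → List.IsChain s l
  | [], _, _ => List.isChain_nil
  | [_], _, _ => List.isChain_singleton _
  | a :: b :: l, h, himp => by
    rw [List.isChain_cons_cons] at h ⊢
    refine ⟨himp a (by simp) b (by simp) h.1, chain'_mem_imp h.2 ?_⟩
    intro a' ha' b' hb' hr
    exact himp a' (by simp [ha']) b' (by simp [hb']) hr

variable {P : PC adj N} {x y₀ : V}

/-- A Vizing fan at `x` with pivot `y₀`, stored top-first (the list is
`[y_k, y_{k-1}, ..., y_0]`). -/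
structure FanS (P : PC adj N) (x y₀ : V) (F : List V) : Prop where
  ne : F ≠ []
  last : F.getLast? = some y₀
  nodup : F.Nodup
  notx : x ∉ F
  colored : ∀ a ∈ F, a ≠ y₀ → P.c x a ≠ none
  chain : List.IsChain (fun a b => ∀ γ, P.c x a = some γ → γ ∉ usedAt P b) F

lemma FanS.single (hxy : x ≠ y₀) : FanS P x y₀ [y₀] where
  ne := by simp
  last := by simp
  nodup := by simp
  notx := by simp [hxy]
  colored := by simp
  chain := List.isChain_singleton _

/-- The shift lemma: given a fan `F` and a color `β` free at `x` and at the top of the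
fan, we can recolor so that everything previously colored stays colored and the pivot
edge `(x, y₀)` becomes colored. -/
lemma shift (hsym : ∀ u v, adj u v → adj v u) :
    ∀ (F : List V) (P : PC adj N), FanS P x y₀ F →
    ∀ β : Fin N, β ∉ usedAt P x → (∀ a L, F = a :: L → β ∉ usedAt P a) →
    adj x y₀ → x ≠ y₀ → P.c x y₀ = none →
    ∃ P' : PC adj N, (∀ u v, P.c u v ≠ none → P'.c u v ≠ none) ∧ P'.c x y₀ ≠ none
  | [], _, hF => absurd rfl hF.ne
  | [a], P, hF => by
    intro β hβx hβh hadj hxy hnone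
    have ha : a = y₀ := by
      have := hF.last
      simp at this
      exact this
    subst ha
    refine ⟨setEdge P hsym x a β hadj hxy hβx (hβh a [] rfl), ?_, ?_⟩
    · intro u v h
      exact setEdge_preserves h
    · rw [setEdge_colored]
      simp
  | a :: b :: T, P, hF => by
    intro β hβx hβh hadj hxy hnone
    have hane : a ≠ y₀ := by
      intro h
      have hlast : (a :: b :: T).getLast? = (b :: T).getLast? := by
        rw [List.getLast?_cons_cons]
      have : y₀ ∈ b :: T := by
        have h2 := hF.last
        rw [hlast] at h2
        have h3 : y₀ ∈ (b :: T).getLast? := by rw [h2]; rfl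
        obtain ⟨h4, h5⟩ := List.mem_getLast?_eq_getLast h3
        rw [h5]
        exact List.getLast_mem h4
      rw [← h] at this
      exact (List.nodup_cons.1 hF.nodup).1 this
    have hcol : P.c x a ≠ none := hF.colored a (by simp) hane
    obtain ⟨γ', hγ'⟩ := Option.ne_none_iff_exists'.1 hcol
    have hax : x ≠ a := fun h => hF.notx (h ▸ (by simp : a ∈ a :: b :: T))
    have hadja : adj x a := P.supp x a hcol
    have hβa : β ∉ usedAt P a := hβh a (b :: T) rfl
    -- recolor (x,a) to β
    set P₁ := setEdge P hsym x a β hadja hax hβx hβa with hP₁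
    have hnodup := hF.nodup
    have hba : b ≠ a := fun h => (List.nodup_cons.1 hnodup).1 (h ▸ (by simp : b ∈ b :: T))
    have hbx : b ≠ x := fun h => hF.notx (h ▸ (by simp : b ∈ a :: b :: T))
    have hmemT : ∀ v ∈ b :: T, v ≠ a ∧ v ≠ x := by
      intro v hv
      constructor
      · intro h
        exact (List.nodup_cons.1 hnodup).1 (h ▸ hv)
      · intro h
        exact hF.notx (h ▸ List.mem_cons_of_mem a hv)
    have husedT : ∀ v ∈ b :: T, usedAt P₁ v = usedAt P v := by
      intro v hv
      obtain ⟨h1, h2⟩ := hmemT v hv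
      exact usedAt_setEdge_other h2 h1
    have hcT : ∀ v, v ≠ a → P₁.c x v = P.c x v := fun v hv => setEdge_c_x hv
    have hF₁ : FanS P₁ x y₀ (b :: T) := by
      constructor
      · simp
      · have h2 := hF.last
        rwa [List.getLast?_cons_cons] at h2
      · exact (List.nodup_cons.1 hnodup).2
      · intro h
        exact hF.notx (List.mem_cons_of_mem a h)
      · intro v hv hvy
        rw [hcT v (hmemT v hv).1]
        exact hF.colored v (List.mem_cons_of_mem a hv) hvy
      · have hch := (List.isChain_cons_cons.1 hF.chain).2
        apply chain'_mem_imp hch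
        intro a' ha' b' hb' hr γ hγ
        rw [husedT b' hb']
        exact hr γ (by rwa [hcT a' (hmemT a' ha').1] at hγ)
    have hγ'x : γ' ∉ usedAt P₁ x := setEdge_old_free hγ'
    have hγ'b : γ' ∉ usedAt P₁ b := by
      rw [husedT b (by simp)]
      exact (List.isChain_cons_cons.1 hF.chain).1 γ' hγ'
    have hnone₁ : P₁.c x y₀ = none := by
      rw [hcT y₀ (fun h => hane h.symm)]
      exact hnone
    obtain ⟨P₂, hP₂a, hP₂b⟩ := shift hsym (b :: T) P₁ hF₁ γ' hγ'x
      (fun a' L hL => by cases hL; exact hγ'b) hadj hxy hnone₁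
    refine ⟨P₂, ?_, hP₂b⟩
    intro u v h
    exact hP₂a u v (setEdge_preserves h)

end Fan

section MaxFan
set_option linter.unusedSectionVars false
variable {P : PC adj N} {x y₀ : V}

def FanExt (P : PC adj N) (x : V) (F : List V) : Prop :=
  ∃ z γ, z ∉ F ∧ P.c x z = some γ ∧ (∀ a L, F = a :: L → γ ∉ usedAt P a)

lemma fan_ext {F : List V} (hirr : ∀ v, ¬ adj v v) (hF : FanS P x y₀ F)
    (hExt : FanExt P x F) : ∃ z, FanS P x y₀ (z :: F) := by
  obtain ⟨z, γ, hzF, hcz, hfree⟩ := hExt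
  have hzx : z ≠ x := by
    intro h
    have := P.supp x z (by simp [hcz])
    rw [h] at this
    exact hirr x this
  refine ⟨z, ?_, ?_, ?_, ?_, ?_, ?_⟩
  · simp
  · obtain ⟨a, L, rfl⟩ : ∃ a L, F = a :: L := by
      cases F with
      | nil => exact absurd rfl hF.ne
      | cons a L => exact ⟨a, L, rfl⟩
    rw [List.getLast?_cons_cons]
    exact hF.last
  · exact List.nodup_cons.2 ⟨hzF, hF.nodup⟩
  · intro h
    rcases List.mem_cons.1 h with h | h
    · exact hzx h.symm
    · exact hF.notx h
  · intro a ha hay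
    rcases List.mem_cons.1 ha with rfl | h
    · simp [hcz]
    · exact hF.colored a h hay
  · obtain ⟨a, L, rfl⟩ : ∃ a L, F = a :: L := by
      cases F with
      | nil => exact absurd rfl hF.ne
      | cons a L => exact ⟨a, L, rfl⟩
    rw [List.isChain_cons_cons]
    refine ⟨?_, hF.chain⟩
    intro γ' hγ'
    have : γ' = γ := by
      rw [hcz] at hγ'
      exact (Option.some_injective _ hγ').symm
    rw [this]
    exact hfree a L rfl
lemma exists_max_fan (hirr : ∀ v, ¬ adj v v) :
    ∀ (n : ℕ) (F : List V), FanS P x y₀ F → Fintype.card V - F.length ≤ n →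
    ∃ F', FanS P x y₀ F' ∧ ¬ FanExt P x F' := by
  intro n
  induction n with
  | zero =>
    intro F hF hlen
    refine ⟨F, hF, ?_⟩
    intro hExt
    obtain ⟨z, hz⟩ := fan_ext hirr hF hExt
    have h1 : (z :: F).length ≤ Fintype.card V := List.Nodup.length_le_card hz.nodup
    simp only [List.length_cons] at h1
    omega
  | succ n ih =>
    intro F hF hlen
    by_cases hExt : FanExt P x F
    · obtain ⟨z, hz⟩ := fan_ext hirr hF hExt
      apply ih (z :: F) hz
      simp only [List.length_cons]
      omega
    · exact ⟨F, hF, hExt⟩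

end MaxFan

section Extend
set_option linter.unusedSectionVars false
set_option maxHeartbeats 1000000

/-- **The extension lemma**: a partial proper coloring with at least `deg(v)+1` colors
everywhere can be extended to color any yet-uncolored edge. -/
lemma extend_coloring (hsym : ∀ u v, adj u v → adj v u) (hirr : ∀ v, ¬ adj v v)
    (HN : ∀ v, (Finset.univ.filter (fun u => adj v u)).card < N)
    (P : PC adj N) (x y₀ : V) (hadj : adj x y₀) (hnone : P.c x y₀ = none) :
    ∃ P' : PC adj N, (∀ u v, P.c u v ≠ none → P'.c u v ≠ none) ∧ P'.c x y₀ ≠ none := by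
  classical
  have hxy : x ≠ y₀ := by
    intro h
    rw [h] at hadj
    exact hirr y₀ hadj
  obtain ⟨F, hF, hmax⟩ := exists_max_fan (P := P) (x := x) (y₀ := y₀) hirr
    (Fintype.card V) [y₀] (FanS.single hxy) (by omega)
  obtain ⟨t, F₁, rfl⟩ : ∃ t F₁, F = t :: F₁ := by
    cases F with
    | nil => exact absurd rfl hF.ne
    | cons t F₁ => exact ⟨t, F₁, rfl⟩
  obtain ⟨α, hα⟩ := exists_free P x (HN x)
  obtain ⟨β, hβt⟩ := exists_free P t (HN t)
  have htx : t ≠ x := fun h => hF.notx (h ▸ (by simp : t ∈ t :: F₁))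
  by_cases hβx : β ∈ usedAt P x
  swap
  · -- easy case : β free at x and t; shift the whole fan
    obtain ⟨P', h1, h2⟩ := shift hsym (t :: F₁) P hF β hβx
      (fun a L hL => by cases hL; exact hβt) hadj hxy hnone
    exact ⟨P', h1, h2⟩
  -- hard case
  obtain ⟨z₀, hz₀⟩ := mem_usedAt.1 hβx
  have hz₀F : z₀ ∈ t :: F₁ := by
    by_contra hc
    exact hmax ⟨z₀, β, hc, hz₀, fun a L hL => by cases hL; exact hβt⟩
  have hz₀y : z₀ ≠ y₀ := by
    intro h
    rw [h, P.symm x y₀] at hz₀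
    rw [P.symm x y₀] at hnone
    rw [hnone] at hz₀
    simp at hz₀
  obtain ⟨A, B0, hFdec⟩ := List.append_of_mem hz₀F
  have hB0ne : B0 ≠ [] := by
    intro h
    rw [h] at hFdec
    have : (t :: F₁).getLast? = some z₀ := by rw [hFdec]; simp
    rw [hF.last] at this
    exact hz₀y (Option.some_injective _ this).symm
  obtain ⟨w, B', rfl⟩ : ∃ w B', B0 = w :: B' := by
    cases B0 with
    | nil => exact absurd rfl hB0ne
    | cons w B' => exact ⟨w, B', rfl⟩
  have hαβ : α ≠ β := fun h => hα (h ▸ hβx)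
  -- nodup decompositions
  have hnodup := hF.nodup
  rw [hFdec] at hnodup
  have hnodupA := (List.nodup_append.1 hnodup).1
  have hnodupZ := (List.nodup_append.1 hnodup).2.1
  have hdisj := (List.nodup_append.1 hnodup).2.2
  have hz₀nA : z₀ ∉ A := fun h => hdisj z₀ h z₀ (by simp) rfl
  have hz₀nB : z₀ ∉ w :: B' := (List.nodup_cons.1 hnodupZ).1
  have hwz₀ : w ≠ z₀ := fun h => hz₀nB (h ▸ (by simp : w ∈ w :: B'))
  have hwF : w ∈ t :: F₁ := by rw [hFdec]; simp
  have hwx : w ≠ x := fun h => hF.notx (h ▸ hwF)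
  -- every colored fan edge except (x,z₀) keeps its color under the flip
  have hcol_ne : ∀ a : V, a ≠ z₀ → ∀ γ, P.c x a = some γ → γ ≠ α ∧ γ ≠ β := by
    intro a haz γ hγ
    constructor
    · intro h
      exact hα (mem_usedAt.2 ⟨a, h ▸ hγ⟩)
    · intro h
      exact haz (P.proper x a z₀ (by simp [hγ]) (by rw [hγ, hz₀, h]))
  -- the chain decomposition of the original fan
  have hchain := hF.chain
  rw [hFdec, show A ++ z₀ :: w :: B' = (A ++ [z₀]) ++ w :: B' by simp] at hchain
  obtain ⟨hchain1, hchain2, hlink⟩ := List.isChain_append.1 hchain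
  have hlink2 : ∀ γ, P.c x z₀ = some γ → γ ∉ usedAt P w := by
    intro γ hγ
    exact hlink z₀ (by rw [List.getLast?_concat]; rfl) w rfl γ hγ
  have hβw : β ∉ usedAt P w := hlink2 β hz₀
  obtain ⟨hchainA, hchainz, hlinkA⟩ :
      List.IsChain _ A ∧ List.IsChain _ [z₀] ∧ _ := List.isChain_append.1 hchain1
  -- the flip
  set Q := flip P α β x with hQ
  have hxR : x ∈ Rset P α β x := x_mem_Rset P α β x
  have hQβx : β ∉ usedAt Q x := by
    rw [hQ, usedAt_flip_mem P α β x hxR, Equiv.swap_apply_right]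
    exact hα
  have hQx_ne : ∀ a : V, a ≠ z₀ → Q.c x a = P.c x a := by
    intro a haz
    rw [hQ, flip_c, if_pos hxR]
    cases hc : P.c x a with
    | none => simp
    | some γ =>
      obtain ⟨h1, h2⟩ := hcol_ne a haz γ hc
      simp [Equiv.swap_apply_of_ne_of_ne h1 h2]
  have hQz₀ : Q.c x z₀ = some α := by
    rw [hQ, flip_c, if_pos hxR, hz₀]
    simp [Equiv.swap_apply_right]
  have hQnone : Q.c x y₀ = none := by rw [hQ, flip_none_iff]; exact hnone
  have hQpres : ∀ u v, P.c u v ≠ none → Q.c u v ≠ none := by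
    intro u v h hc
    exact h ((flip_none_iff P α β x u v).1 hc)
  -- transfer of "chain" conditions for non-z₀ members
  have htransfer : ∀ a b : V, a ≠ z₀ →
      (∀ γ, P.c x a = some γ → γ ∉ usedAt P b) →
      (∀ γ, Q.c x a = some γ → γ ∉ usedAt Q b) := by
    intro a b haz h γ hγ
    rw [hQx_ne a haz] at hγ
    obtain ⟨h1, h2⟩ := hcol_ne a haz γ hγ
    rw [hQ, usedAt_flip_offcolor P α β x h1 h2]
    exact h γ hγ
  by_cases hwm : β ∈ usedAt Q w
  swap
  · -- Case A : shift the partial fan (w :: B') in Q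
    have hsubB : List.Sublist (w :: B') (t :: F₁) := by
      rw [hFdec]
      exact ((w :: B').sublist_cons_self z₀).trans (List.sublist_append_right A _)
    have hFB : FanS Q x y₀ (w :: B') := by
      constructor
      · simp
      · have := hF.last
        rw [hFdec, List.getLast?_append_of_ne_nil _ (by simp),
          List.getLast?_cons_cons] at this
        rw [this]
      · exact hsubB.nodup hF.nodup
      · intro h
        exact hF.notx (hsubB.mem h)
      · intro a ha hay
        have haz : a ≠ z₀ := fun h => hz₀nB (h ▸ ha)
        rw [hQx_ne a haz]
        exact hF.colored a (hsubB.mem ha) hay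
      · apply chain'_mem_imp hchain2
        intro a ha b hb hr
        exact htransfer a b (fun h => hz₀nB (h ▸ ha)) hr
    obtain ⟨P', h1, h2⟩ := shift hsym (w :: B') Q hFB β hQβx
      (fun a L hL => by cases hL; exact hwm) hadj hxy hQnone
    exact ⟨P', fun u v h => h1 u v (hQpres u v h), h2⟩
  · -- Case B : the full fan is still a fan for Q ; shift it entirely
    have hwR : w ∈ Rset P α β x := by
      by_contra hc
      rw [hQ, usedAt_flip_not_mem P α β x hc] at hwm
      exact hβw hwm
    have hαw : α ∈ usedAt P w := by
      rw [hQ, usedAt_flip_mem P α β x hwR, Equiv.swap_apply_right] at hwm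
      exact hwm
    have htR : t ∉ Rset P α β x := by
      intro htR
      have hwt : w ≠ t := by
        have htnF₁ : t ∉ F₁ := (List.nodup_cons.1 hF.nodup).1
        cases A with
        | nil =>
          simp only [List.nil_append] at hFdec
          have : t = z₀ := (List.cons_eq_cons.1 hFdec).1
          rw [this]
          exact hwz₀
        | cons a A' =>
          simp only [List.cons_append] at hFdec
          have hF₁eq : F₁ = A' ++ z₀ :: w :: B' := (List.cons_eq_cons.1 hFdec).2
          intro h
          apply htnF₁
          rw [hF₁eq, ← h]
          simp
      have hdx : degAB P α β x ≤ 1 := by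
        rw [degAB_comm]
        exact degAB_le_one P β α hα
      exact no_three_ends P α β x w t hwR htR (Ne.symm hwx) (Ne.symm htx) hwt
        hdx (degAB_le_one P α β hβw) (degAB_le_one P α β hβt)
    have hQβt : β ∉ usedAt Q t := by
      rw [hQ, usedAt_flip_not_mem P α β x htR]
      exact hβt
    -- the full fan is a Q-fan
    have hFQ : FanS Q x y₀ (t :: F₁) := by
      constructor
      · exact hF.ne
      · exact hF.last
      · exact hF.nodup
      · exact hF.notx
      · intro a ha hay
        by_cases haz : a = z₀
        · rw [haz, hQz₀]; simp
        · rw [hQx_ne a haz]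
          exact hF.colored a ha hay
      · -- chain for Q
        rw [hFdec]
        apply List.isChain_append.2
        refine ⟨?_, ?_, ?_⟩
        · apply chain'_mem_imp hchainA
          intro a ha b hb hr
          exact htransfer a b (fun h => hz₀nA (h ▸ ha)) hr
        · rw [List.isChain_cons_cons]
          constructor
          · intro γ hγ
            rw [hQz₀] at hγ
            have : γ = α := (Option.some_injective _ hγ).symm
            rw [this, hQ, usedAt_flip_mem P α β x hwR, Equiv.swap_apply_left]
            exact hβw
          · apply chain'_mem_imp hchain2
            intro a ha b hb hr
            exact htransfer a b (fun h => hz₀nB (h ▸ ha)) hr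
        · intro a ha b hb γ hγ
          have hbz : z₀ = b := by simpa using hb
          have haA : a ∈ A := by
            cases A with
            | nil => simp at ha
            | cons a' A' => exact List.mem_of_mem_getLast? ha
          have haz : a ≠ z₀ := fun h => hz₀nA (h ▸ haA)
          rw [hQx_ne a haz] at hγ
          obtain ⟨h1, h2⟩ := hcol_ne a haz γ hγ
          rw [← hbz, hQ, usedAt_flip_offcolor P α β x h1 h2]
          have horig : ∀ γ', P.c x a = some γ' → γ' ∉ usedAt P z₀ :=
            hlinkA a ha z₀ rfl
          exact horig γ hγ
    obtain ⟨P', h1, h2⟩ := shift hsym (t :: F₁) Q hFQ β hQβx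
      (fun a L hL => by cases hL; exact hQβt) hadj hxy hQnone
    exact ⟨P', fun u v h => h1 u v (hQpres u v h), h2⟩

end Extend

section Total
set_option linter.unusedSectionVars false

def emptyPC (adj : V → V → Prop) (N : ℕ) : PC adj N where
  c := fun _ _ => none
  symm := fun _ _ => rfl
  supp := fun _ _ h => absurd rfl h
  proper := fun _ _ _ h _ => absurd rfl h

lemma vizing_total (hsym : ∀ u v, adj u v → adj v u) (hirr : ∀ v, ¬ adj v v)
    (HN : ∀ v, (Finset.univ.filter (fun u => adj v u)).card < N) :
    ∃ P : PC adj N, ∀ u v, adj u v → P.c u v ≠ none := by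
  classical
  suffices h : ∀ (n : ℕ) (P : PC adj N),
      ((Finset.univ ×ˢ Finset.univ).filter
        (fun e : V × V => adj e.1 e.2 ∧ P.c e.1 e.2 = none)).card ≤ n →
      ∃ P' : PC adj N, ∀ u v, adj u v → P'.c u v ≠ none by
    exact h _ (emptyPC adj N) le_rfl
  intro n
  induction n with
  | zero =>
    intro P hP
    refine ⟨P, fun u v hadj hnone => ?_⟩
    have : (u, v) ∈ (Finset.univ ×ˢ Finset.univ).filter
        (fun e : V × V => adj e.1 e.2 ∧ P.c e.1 e.2 = none) := by
      simp [hadj, hnone]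
    have := Finset.card_pos.2 ⟨_, this⟩
    omega
  | succ n ih =>
    intro P hP
    set U := (Finset.univ ×ˢ Finset.univ).filter
      (fun e : V × V => adj e.1 e.2 ∧ P.c e.1 e.2 = none) with hU
    by_cases hne : U.Nonempty
    · obtain ⟨⟨x, y⟩, hxy⟩ := hne
      rw [hU, Finset.mem_filter] at hxy
      obtain ⟨-, hadj, hnone⟩ := hxy
      obtain ⟨P', hpres, hcol⟩ := extend_coloring hsym hirr HN P x y hadj hnone
      apply ih P'
      have hsub : (Finset.univ ×ˢ Finset.univ).filter
          (fun e : V × V => adj e.1 e.2 ∧ P'.c e.1 e.2 = none) ⊆ U.erase (x, y) := by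
        intro e he
        rw [Finset.mem_filter] at he
        obtain ⟨hmem, hadj', hnone'⟩ := he
        rw [Finset.mem_erase]
        constructor
        · intro h
          rw [h] at hnone'
          exact hcol hnone'
        · rw [hU, Finset.mem_filter]
          refine ⟨hmem, hadj', ?_⟩
          by_contra hc
          exact hpres e.1 e.2 hc hnone'
      have h1 := Finset.card_le_card hsub
      have h2 : (U.erase (x, y)).card = U.card - 1 := by
        apply Finset.card_erase_of_mem
        rw [hU, Finset.mem_filter]
        exact ⟨by simp, hadj, hnone⟩
      have h3 : 0 < U.card := Finset.card_pos.2 ⟨(x, y), by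
        rw [hU, Finset.mem_filter]; exact ⟨by simp, hadj, hnone⟩⟩
      omega
    · rw [Finset.not_nonempty_iff_eq_empty] at hne
      refine ⟨P, fun u v hadj hnone => ?_⟩
      have : (u, v) ∈ U := by rw [hU, Finset.mem_filter]; exact ⟨by simp, hadj, hnone⟩
      rw [hne] at this
      exact absurd this (Finset.notMem_empty _)

end Total
end VizingAux

section Vizing
open VizingAux
variable {V : Type*} [Fintype V] [DecidableEq V]

/-- Vizing's theorem, in the ordered-pair edge-set formulation. -/
theorem vizing_coloring (E : Finset (V × V))
    (hs : ∀ e ∈ E, e.1 ≠ e.2) (hnd : ∀ e ∈ E, (e.2, e.1) ∉ E)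
    (d : ℕ) (hdeg : ∀ v : V, (E.filter (fun e => e.1 = v ∨ e.2 = v)).card ≤ d) :
    ∃ C : V × V → Fin (d + 1), ∀ e ∈ E, ∀ f ∈ E, e ≠ f →
      (e.1 = f.1 ∨ e.1 = f.2 ∨ e.2 = f.1 ∨ e.2 = f.2) → C e ≠ C f := by
  classical
  set adj : V → V → Prop := fun u v => (u, v) ∈ E ∨ (v, u) ∈ E with hadj
  letI hD : DecidableRel adj := fun u v => inferInstanceAs (Decidable (_ ∨ _))
  have hsym : ∀ u v, adj u v → adj v u := fun u v h => h.symm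
  have hirr : ∀ v, ¬ adj v v := by
    intro v h
    rcases h with h | h <;> exact hs (v, v) h rfl
  have HN : ∀ v, (Finset.univ.filter (fun u => adj v u)).card < d + 1 := by
    intro v
    have hle : (Finset.univ.filter (fun u => adj v u)).card ≤
        (E.filter (fun e => e.1 = v ∨ e.2 = v)).card := by
      apply Finset.card_le_card_of_injOn (fun u => if (v, u) ∈ E then (v, u) else (u, v))
      · intro u hu
        beta_reduce
        rw [Finset.mem_coe, Finset.mem_filter] at hu
        rcases hu.2 with h | h
        · rw [if_pos h]
          exact Finset.mem_filter.2 ⟨h, Or.inl rfl⟩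
        · by_cases h2 : (v, u) ∈ E
          · rw [if_pos h2]
            exact Finset.mem_filter.2 ⟨h2, Or.inl rfl⟩
          · rw [if_neg h2]
            exact Finset.mem_filter.2 ⟨h, Or.inr rfl⟩
      · intro u1 h1 u2 h2 heq
        rw [Finset.mem_coe, Finset.mem_filter] at h1 h2
        have hvu1 : u1 ≠ v := by
          intro h
          rw [h] at h1
          exact hirr v h1.2
        have hvu2 : u2 ≠ v := by
          intro h
          rw [h] at h2
          exact hirr v h2.2
        by_cases c1 : (v, u1) ∈ E <;> by_cases c2 : (v, u2) ∈ E <;>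
          simp only [c1, c2, if_true, if_false, Prod.mk.injEq] at heq
        · exact heq.2
        · exact absurd heq.2 hvu1
        · exact absurd heq.1 hvu1
        · exact heq.1
    have := hdeg v
    omega
  obtain ⟨P, hP⟩ := vizing_total (adj := adj) (N := d + 1) hsym hirr HN
  refine ⟨fun e => (P.c e.1 e.2).getD ⟨0, Nat.succ_pos d⟩, ?_⟩
  intro e he f hf hef hshare hCeq
  have hadje : adj e.1 e.2 := Or.inl he
  have hadjf : adj f.1 f.2 := Or.inl hf
  obtain ⟨γe, hγe⟩ := Option.ne_none_iff_exists'.1 (hP e.1 e.2 hadje)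
  obtain ⟨γf, hγf⟩ := Option.ne_none_iff_exists'.1 (hP f.1 f.2 hadjf)
  have hvals : γe = γf := by
    simpa [hγe, hγf] using hCeq
  have hoption : P.c e.1 e.2 = P.c f.1 f.2 := by rw [hγe, hγf, hvals]
  have hene : P.c e.1 e.2 ≠ none := by simp [hγe]
  have hswap : f ≠ (e.2, e.1) := by
    intro h
    rw [h] at hf
    exact hnd e he hf
  rcases hshare with h | h | h | h
  · -- e.1 = f.1
    have := P.proper e.1 e.2 f.2 hene (by rw [hoption, h])
    exact hef (Prod.ext h this)
  · -- e.1 = f.2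
    have hsymm : P.c e.1 e.2 = P.c f.2 f.1 := by rw [hoption, P.symm]
    have := P.proper e.1 e.2 f.1 hene (by rw [hsymm, h])
    exact hswap (Prod.ext this.symm h.symm)
  · -- e.2 = f.1
    have h1 : P.c e.2 e.1 = P.c f.1 f.2 := by rw [← P.symm, hoption]
    have h2 : P.c e.2 e.1 ≠ none := by rw [P.symm, hγe]; simp
    have := P.proper e.2 e.1 f.2 h2 (by rw [h1, h])
    exact hswap (Prod.ext h.symm this.symm)
  · -- e.2 = f.2
    have h1 : P.c e.2 e.1 = P.c f.2 f.1 := by rw [← P.symm, hoption, P.symm]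
    have h2 : P.c e.2 e.1 ≠ none := by rw [P.symm, hγe]; simp
    have := P.proper e.2 e.1 f.1 h2 (by rw [h1, h])
    exact hef (Prod.ext this h)


/-- From Vizing's theorem: a matching capturing at least a `1/(d+1)` fraction of the
total weight. -/
theorem exists_heavy_matching (E : Finset (V × V))
    (hs : ∀ e ∈ E, e.1 ≠ e.2) (hnd : ∀ e ∈ E, (e.2, e.1) ∉ E)
    (d : ℕ) (hdeg : ∀ v : V, (E.filter (fun e => e.1 = v ∨ e.2 = v)).card ≤ d)
    (w : V × V → ℝ) (hw : ∀ e ∈ E, 0 ≤ w e) :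
    ∃ M ⊆ E, (∀ e ∈ M, ∀ f ∈ M, e ≠ f →
        e.1 ≠ f.1 ∧ e.1 ≠ f.2 ∧ e.2 ≠ f.1 ∧ e.2 ≠ f.2) ∧
      ∑ e ∈ E, w e ≤ (d + 1 : ℝ) * ∑ e ∈ M, w e := by
  classical
  obtain ⟨C, hC⟩ := vizing_coloring E hs hnd d hdeg
  -- split E into color classes and pick the heaviest one
  have hsplit : ∑ e ∈ E, w e =
      ∑ i : Fin (d + 1), ∑ e ∈ E.filter (fun e => C e = i), w e := by
    rw [Finset.sum_fiberwise_of_maps_to (fun e _ => Finset.mem_univ (C e))]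
  obtain ⟨i₀, -, hmax⟩ := Finset.exists_max_image (Finset.univ : Finset (Fin (d + 1)))
    (fun i => ∑ e ∈ E.filter (fun e => C e = i), w e) ⟨0, Finset.mem_univ _⟩
  refine ⟨E.filter (fun e => C e = i₀), Finset.filter_subset _ _, ?_, ?_⟩
  · intro e he f hf hef
    rw [Finset.mem_filter] at he hf
    have hne := hC e he.1 f hf.1 hef
    by_contra hcon
    push_neg at hcon
    have hshare : e.1 = f.1 ∨ e.1 = f.2 ∨ e.2 = f.1 ∨ e.2 = f.2 := by
      by_cases h1 : e.1 = f.1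
      · exact Or.inl h1
      by_cases h2 : e.1 = f.2
      · exact Or.inr (Or.inl h2)
      by_cases h3 : e.2 = f.1
      · exact Or.inr (Or.inr (Or.inl h3))
      · exact Or.inr (Or.inr (Or.inr (hcon h1 h2 h3)))
    exact hne hshare (by rw [he.2, hf.2])
  · rw [hsplit]
    calc ∑ i : Fin (d + 1), ∑ e ∈ E.filter (fun e => C e = i), w e
        ≤ ∑ _i : Fin (d + 1), ∑ e ∈ E.filter (fun e => C e = i₀), w e :=
          Finset.sum_le_sum (fun i _ => hmax i (Finset.mem_univ i))
      _ = (d + 1 : ℝ) * ∑ e ∈ E.filter (fun e => C e = i₀), w e := by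
          rw [Finset.sum_const, Finset.card_univ, Fintype.card_fin, nsmul_eq_mul]
          push_cast
          ring

end Vizing


/-- Total energy of an assignment `x` for a pairwise MRF with node potentials `φ`
and edge potentials `ψ`, over the edge set `E` (ordered pairs, each edge once). -/
noncomputable def mrfEnergy {V S : Type*} [Fintype V]
    (E : Finset (V × V)) (φ : V → S → ℝ) (ψ : V × V → S → S → ℝ) (x : V → S) : ℝ :=
  ∑ v, φ v (x v) + ∑ e ∈ E, ψ e (x e.1) (x e.2)

/-- Partition function of the pairwise MRF. -/
noncomputable def mrfZ {V S : Type*} [Fintype V] [DecidableEq V] [Fintype S]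
    (E : Finset (V × V)) (φ : V → S → ℝ) (ψ : V × V → S → S → ℝ) : ℝ :=
  ∑ x : V → S, Real.exp (mrfEnergy E φ ψ x)

/-- `ψ_e^U`, the maximum of the edge potential over `Σ²`. -/
noncomputable def psiU {V S : Type*} [Fintype S] [Nonempty S]
    (ψ : V × V → S → S → ℝ) (e : V × V) : ℝ := ⨆ p : S × S, ψ e p.1 p.2

/-- `ψ_e^L`, the minimum of the edge potential over `Σ²`. -/
noncomputable def psiL {V S : Type*} [Fintype S] [Nonempty S]
    (ψ : V × V → S → S → ℝ) (e : V × V) : ℝ := ⨅ p : S × S, ψ e p.1 p.2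

/-- Energy of an assignment restricted to a vertex set `A` (node potentials of
vertices in `A`, and edge potentials of the edges of `E'` inside `A`). -/
noncomputable def compEnergy {V S : Type*} [Fintype V] [DecidableEq V]
    (E' : Finset (V × V)) (φ : V → S → ℝ) (ψ : V × V → S → S → ℝ)
    (A : Finset V) (x : V → S) : ℝ :=
  ∑ v ∈ A, φ v (x v) + ∑ e ∈ E'.filter (fun e => e.1 ∈ A), ψ e (x e.1) (x e.2)

/-- Partition function of the MRF restricted to the vertex set `A`
(assignments are normalized to take the fixed value `σ0` outside of `A`). -/
noncomputable def compZ {V S : Type*} [Fintype V] [DecidableEq V] [Fintype S] [DecidableEq S]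
    (E' : Finset (V × V)) (φ : V → S → ℝ) (ψ : V × V → S → S → ℝ)
    (A : Finset V) (σ0 : S) : ℝ :=
  ∑ x ∈ Finset.univ.filter (fun x : V → S => ∀ v, v ∉ A → x v = σ0),
    Real.exp (compEnergy E' φ ψ A x)

section MRF
set_option linter.unusedSectionVars false
variable {V S : Type*} [Fintype V] [DecidableEq V] [Fintype S] [Nonempty S]
variable (φ : V → S → ℝ) (ψ : V × V → S → S → ℝ)

lemma mrfZ_pos (E : Finset (V × V)) : 0 < mrfZ E φ ψ := by
  apply Finset.sum_pos (fun x _ => Real.exp_pos _)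
  exact Finset.univ_nonempty

lemma one_le_mrfZ (E : Finset (V × V)) (hφ : ∀ v s, 0 ≤ φ v s)
    (hψ : ∀ e a b, 0 ≤ ψ e a b) : 1 ≤ mrfZ E φ ψ := by
  have hx : ∀ x : V → S, (1 : ℝ) ≤ Real.exp (mrfEnergy E φ ψ x) := by
    intro x
    rw [Real.one_le_exp_iff]
    apply add_nonneg
    · exact Finset.sum_nonneg (fun v _ => hφ v (x v))
    · exact Finset.sum_nonneg (fun e _ => hψ e (x e.1) (x e.2))
  have hsingle := Finset.single_le_sum (f := fun x => Real.exp (mrfEnergy E φ ψ x))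
    (fun i _ => (Real.exp_pos _).le) (Finset.mem_univ (Classical.arbitrary (V → S)))
  exact le_trans (hx _) hsingle

lemma log_mrfZ_nonneg (E : Finset (V × V)) (hφ : ∀ v s, 0 ≤ φ v s)
    (hψ : ∀ e a b, 0 ≤ ψ e a b) : 0 ≤ Real.log (mrfZ E φ ψ) :=
  Real.log_nonneg (one_le_mrfZ φ ψ E hφ hψ)

lemma psi_le_psiU (e : V × V) (a b : S) : ψ e a b ≤ psiU ψ e :=
  le_ciSup (f := fun p : S × S => ψ e p.1 p.2)
    (Set.Finite.bddAbove (Set.finite_range _)) (a, b)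

lemma psiL_le_psi (e : V × V) (a b : S) : psiL ψ e ≤ ψ e a b :=
  ciInf_le (f := fun p : S × S => ψ e p.1 p.2)
    (Set.Finite.bddBelow (Set.finite_range _)) (a, b)

lemma psiL_nonneg (e : V × V) (hψ : ∀ e a b, 0 ≤ ψ e a b) : 0 ≤ psiL ψ e :=
  le_ciInf (fun p => hψ e p.1 p.2)

lemma psiU_exists (e : V × V) : ∃ p : S × S, ψ e p.1 p.2 = psiU ψ e := by
  obtain ⟨p, hp⟩ := Finite.exists_max (fun p : S × S => ψ e p.1 p.2)
  refine ⟨p, le_antisymm (psi_le_psiU ψ e p.1 p.2) (ciSup_le (fun q => hp q))⟩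

lemma energy_decomp (E b : Finset (V × V)) (hb : b ⊆ E) (x : V → S) :
    mrfEnergy E φ ψ x = mrfEnergy (E \ b) φ ψ x + ∑ e ∈ b, ψ e (x e.1) (x e.2) := by
  unfold mrfEnergy
  rw [add_assoc]
  congr 1
  rw [Finset.sum_sdiff hb]

lemma log_sandwich (E b : Finset (V × V)) (hb : b ⊆ E) :
    Real.log (mrfZ (E \ b) φ ψ) + ∑ e ∈ b, psiL ψ e ≤ Real.log (mrfZ E φ ψ) ∧
    Real.log (mrfZ E φ ψ) ≤ Real.log (mrfZ (E \ b) φ ψ) + ∑ e ∈ b, psiU ψ e := by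
  have hZb := mrfZ_pos φ ψ (E \ b)
  have hZE := mrfZ_pos φ ψ E
  constructor
  · -- lower bound
    have hle : Real.exp (∑ e ∈ b, psiL ψ e) * mrfZ (E \ b) φ ψ ≤ mrfZ E φ ψ := by
      rw [mrfZ, mrfZ, Finset.mul_sum]
      apply Finset.sum_le_sum
      intro x _
      rw [← Real.exp_add, energy_decomp φ ψ E b hb x]
      apply Real.exp_le_exp.2
      have := Finset.sum_le_sum (fun e (_ : e ∈ b) => psiL_le_psi ψ e (x e.1) (x e.2))
      linarith
    calc Real.log (mrfZ (E \ b) φ ψ) + ∑ e ∈ b, psiL ψ e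
        = Real.log (Real.exp (∑ e ∈ b, psiL ψ e) * mrfZ (E \ b) φ ψ) := by
          rw [Real.log_mul (Real.exp_ne_zero _) (ne_of_gt hZb), Real.log_exp]
          ring
      _ ≤ Real.log (mrfZ E φ ψ) := Real.log_le_log (by positivity) hle
  · have hle : mrfZ E φ ψ ≤ Real.exp (∑ e ∈ b, psiU ψ e) * mrfZ (E \ b) φ ψ := by
      rw [mrfZ, mrfZ, Finset.mul_sum]
      apply Finset.sum_le_sum
      intro x _
      rw [← Real.exp_add, energy_decomp φ ψ E b hb x]
      apply Real.exp_le_exp.2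
      have := Finset.sum_le_sum (fun e (_ : e ∈ b) => psi_le_psiU ψ e (x e.1) (x e.2))
      linarith
    calc Real.log (mrfZ E φ ψ) ≤
        Real.log (Real.exp (∑ e ∈ b, psiU ψ e) * mrfZ (E \ b) φ ψ) :=
          Real.log_le_log hZE hle
      _ = Real.log (mrfZ (E \ b) φ ψ) + ∑ e ∈ b, psiU ψ e := by
          rw [Real.log_mul (Real.exp_ne_zero _) (ne_of_gt hZb), Real.log_exp]
          ring

lemma sum_psiU_le (E : Finset (V × V))
    (hs : ∀ e ∈ E, e.1 ≠ e.2) (hnd : ∀ e ∈ E, (e.2, e.1) ∉ E)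
    (hφ : ∀ v s, 0 ≤ φ v s) (hψ : ∀ e a b, 0 ≤ ψ e a b)
    (d : ℕ) (hdeg : ∀ v : V, (E.filter (fun e => e.1 = v ∨ e.2 = v)).card ≤ d) :
    ∑ e ∈ E, psiU ψ e ≤ ((d : ℝ) + 1) * Real.log (mrfZ E φ ψ) := by
  classical
  obtain ⟨M, hME, hMmatch, hMw⟩ := exists_heavy_matching E hs hnd d hdeg (psiU ψ)
    (fun e _ => le_trans (hψ e (Classical.arbitrary S) (Classical.arbitrary S))
      (psi_le_psiU ψ e _ _))
  -- build the assignment realizing the maxima on the matching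
  let pick : V × V → S × S := fun e => (psiU_exists ψ e).choose
  have hpick : ∀ e, ψ e (pick e).1 (pick e).2 = psiU ψ e := fun e => (psiU_exists ψ e).choose_spec
  let x₀ : V → S := fun v =>
    if h : ∃ e, e ∈ M ∧ (v = e.1 ∨ v = e.2) then
      (if v = h.choose.1 then (pick h.choose).1 else (pick h.choose).2)
    else Classical.arbitrary S
  have hx₀ : ∀ e ∈ M, x₀ e.1 = (pick e).1 ∧ x₀ e.2 = (pick e).2 := by
    intro e heM
    have hne12 : e.1 ≠ e.2 := hs e (hME heM)
    constructor
    · have h : ∃ f, f ∈ M ∧ (e.1 = f.1 ∨ e.1 = f.2) := ⟨e, heM, Or.inl rfl⟩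
      have hch := h.choose_spec
      have hfe : h.choose = e := by
        by_contra hc
        obtain ⟨h1, h2, h3, h4⟩ := hMmatch e heM h.choose hch.1 (Ne.symm hc)
        rcases hch.2 with h5 | h5
        · exact h1 h5
        · exact h2 h5
      simp only [x₀, dif_pos h]
      rw [if_pos (by rw [hfe]), hfe]
    · have h : ∃ f, f ∈ M ∧ (e.2 = f.1 ∨ e.2 = f.2) := ⟨e, heM, Or.inr rfl⟩
      have hch := h.choose_spec
      have hfe : h.choose = e := by
        by_contra hc
        obtain ⟨h1, h2, h3, h4⟩ := hMmatch e heM h.choose hch.1 (Ne.symm hc)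
        rcases hch.2 with h5 | h5
        · exact h3 h5
        · exact h4 h5
      simp only [x₀, dif_pos h]
      rw [if_neg (by rw [hfe]; exact fun h => hne12 h.symm), hfe]
  -- energy of x₀ dominates the matching weight
  have hen : ∑ e ∈ M, psiU ψ e ≤ mrfEnergy E φ ψ x₀ := by
    unfold mrfEnergy
    have h1 : 0 ≤ ∑ v, φ v (x₀ v) := Finset.sum_nonneg (fun v _ => hφ v _)
    have h2 : ∑ e ∈ M, psiU ψ e = ∑ e ∈ M, ψ e (x₀ e.1) (x₀ e.2) := by
      apply Finset.sum_congr rfl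
      intro e heM
      obtain ⟨he1, he2⟩ := hx₀ e heM
      rw [he1, he2, hpick]
    have h3 : ∑ e ∈ M, ψ e (x₀ e.1) (x₀ e.2) ≤ ∑ e ∈ E, ψ e (x₀ e.1) (x₀ e.2) :=
      Finset.sum_le_sum_of_subset_of_nonneg hME (fun e _ _ => hψ e _ _)
    linarith
  have hlog : mrfEnergy E φ ψ x₀ ≤ Real.log (mrfZ E φ ψ) := by
    rw [Real.le_log_iff_exp_le (mrfZ_pos φ ψ E)]
    exact Finset.single_le_sum (f := fun x => Real.exp (mrfEnergy E φ ψ x))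
      (fun i _ => (Real.exp_pos _).le) (Finset.mem_univ x₀)
  have hd1 : (0 : ℝ) ≤ (d : ℝ) + 1 := by positivity
  calc ∑ e ∈ E, psiU ψ e ≤ ((d : ℝ) + 1) * ∑ e ∈ M, psiU ψ e := by
        push_cast at hMw ⊢
        linarith
    _ ≤ ((d : ℝ) + 1) * Real.log (mrfZ E φ ψ) := by
        apply mul_le_mul_of_nonneg_left _ hd1
        linarith

end MRF

/-- With `B` a random edge subset (per-edge probability at
most `ε`), `log Ẑ_LB(b) = log Z(E \ b) + ∑_{e∈b} ψ_e^L` and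
`log Ẑ_UB(b) = log Z(E \ b) + ∑_{e∈b} ψ_e^U` (where `log Z(E\b) = ∑_j log Z_j`
over the components of `(V, E\b)`): the deterministic sandwich
`log Ẑ_LB ≤ log Z ≤ log Ẑ_UB` holds for every `b ⊆ E`, and in expectation
`E[log Ẑ_UB] ≤ (1 + ε(dstar+1)) log Z` and
`E[log Ẑ_LB] ≥ (1 − ε(dstar+1)) log Z`. -/
theorem randomized_log_partition_bounds {V S : Type*} [Fintype V] [DecidableEq V]
    [Fintype S] [Nonempty S]
    (E : Finset (V × V))
    (hsimple : ∀ e ∈ E, e.1 ≠ e.2)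
    (hnodup : ∀ e ∈ E, (e.2, e.1) ∉ E)
    (φ : V → S → ℝ) (ψ : V × V → S → S → ℝ)
    (hφ : ∀ v s, 0 ≤ φ v s) (hψ : ∀ e a b, 0 ≤ ψ e a b)
    (dstar : ℕ)
    (hdeg : ∀ v : V, (E.filter (fun e => e.1 = v ∨ e.2 = v)).card ≤ dstar)
    (ε : ℝ) (hε : 0 ≤ ε)
    (p : Finset (V × V) → ℝ)
    (hp0 : ∀ b, 0 ≤ p b) (hp1 : ∑ b : Finset (V × V), p b = 1)
    (hsupp : ∀ b, p b ≠ 0 → b ⊆ E)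
    (hmarg : ∀ e ∈ E,
      ∑ b ∈ Finset.univ.filter (fun b : Finset (V × V) => e ∈ b), p b ≤ ε) :
    (∀ b ⊆ E,
      Real.log (mrfZ (E \ b) φ ψ) + ∑ e ∈ b, psiL ψ e ≤ Real.log (mrfZ E φ ψ) ∧
      Real.log (mrfZ E φ ψ) ≤ Real.log (mrfZ (E \ b) φ ψ) + ∑ e ∈ b, psiU ψ e) ∧
    (∑ b : Finset (V × V),
        p b * (Real.log (mrfZ (E \ b) φ ψ) + ∑ e ∈ b, psiU ψ e)
      ≤ (1 + ε * ((dstar : ℝ) + 1)) * Real.log (mrfZ E φ ψ)) ∧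
    ((1 - ε * ((dstar : ℝ) + 1)) * Real.log (mrfZ E φ ψ)
      ≤ ∑ b : Finset (V × V),
          p b * (Real.log (mrfZ (E \ b) φ ψ) + ∑ e ∈ b, psiL ψ e)) := by
  classical
  have hsand : ∀ b ⊆ E,
      Real.log (mrfZ (E \ b) φ ψ) + ∑ e ∈ b, psiL ψ e ≤ Real.log (mrfZ E φ ψ) ∧
      Real.log (mrfZ E φ ψ) ≤ Real.log (mrfZ (E \ b) φ ψ) + ∑ e ∈ b, psiU ψ e :=
    fun b hb => log_sandwich φ ψ E b hb
  refine ⟨hsand, ?_, ?_⟩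
  all_goals {
    have hL0 : 0 ≤ Real.log (mrfZ E φ ψ) := log_mrfZ_nonneg φ ψ E hφ hψ
    have hkey : ∑ e ∈ E, psiU ψ e ≤ ((dstar : ℝ) + 1) * Real.log (mrfZ E φ ψ) :=
      sum_psiU_le φ ψ E hsimple hnodup hφ hψ dstar hdeg
    set L := Real.log (mrfZ E φ ψ) with hLdef
    set g : V × V → ℝ := fun e => psiU ψ e - psiL ψ e with hgdef
    have hg0 : ∀ e, 0 ≤ g e := by
      intro e
      simp only [hgdef, sub_nonneg]
      exact le_trans (psiL_le_psi ψ e (Classical.arbitrary S) (Classical.arbitrary S))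
        (psi_le_psiU ψ e _ _)
    have hgU : ∀ e, g e ≤ psiU ψ e := by
      intro e
      have := psiL_nonneg ψ e hψ
      simp only [hgdef]
      linarith
    -- the expected gap bound
    have hterm : ∀ b : Finset (V × V),
        p b * ∑ e ∈ b, g e = ∑ e ∈ E, (if e ∈ b then p b * g e else 0) := by
      intro b
      by_cases hp : p b = 0
      · rw [hp]
        simp
      · have hb : b ⊆ E := hsupp b hp
        rw [Finset.sum_ite_mem, Finset.inter_eq_right.2 hb, Finset.mul_sum]
    have hgap : ∑ b : Finset (V × V), p b * ∑ e ∈ b, g e ≤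
        ε * (((dstar : ℝ) + 1) * L) := by
      calc ∑ b : Finset (V × V), p b * ∑ e ∈ b, g e
          = ∑ b : Finset (V × V), ∑ e ∈ E, (if e ∈ b then p b * g e else 0) :=
            Finset.sum_congr rfl (fun b _ => hterm b)
        _ = ∑ e ∈ E, ∑ b : Finset (V × V), (if e ∈ b then p b * g e else 0) :=
            Finset.sum_comm
        _ = ∑ e ∈ E, (∑ b ∈ Finset.univ.filter (fun b : Finset (V × V) => e ∈ b), p b)
              * g e := by
            apply Finset.sum_congr rfl
            intro e _
            rw [Finset.sum_filter, Finset.sum_mul]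
            apply Finset.sum_congr rfl
            intro b _
            split <;> simp
        _ ≤ ∑ e ∈ E, ε * g e := by
            apply Finset.sum_le_sum
            intro e he
            exact mul_le_mul_of_nonneg_right (hmarg e he) (hg0 e)
        _ = ε * ∑ e ∈ E, g e := by rw [Finset.mul_sum]
        _ ≤ ε * ∑ e ∈ E, psiU ψ e := by
            apply mul_le_mul_of_nonneg_left _ hε
            exact Finset.sum_le_sum (fun e _ => hgU e)
        _ ≤ ε * (((dstar : ℝ) + 1) * L) := mul_le_mul_of_nonneg_left hkey hε
    first
    | · -- upper bound on the expectation of the UB estimate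
        have hub : ∀ b : Finset (V × V),
            p b * (Real.log (mrfZ (E \ b) φ ψ) + ∑ e ∈ b, psiU ψ e) ≤
            p b * (L + ∑ e ∈ b, g e) := by
          intro b
          by_cases hp : p b = 0
          · rw [hp, zero_mul, zero_mul]
          · apply mul_le_mul_of_nonneg_left _ (hp0 b)
            have hb : b ⊆ E := hsupp b hp
            have h1 := (hsand b hb).1
            have h2 : ∑ e ∈ b, g e = ∑ e ∈ b, psiU ψ e - ∑ e ∈ b, psiL ψ e := by
              rw [← Finset.sum_sub_distrib]
            linarith
        calc ∑ b : Finset (V × V),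
              p b * (Real.log (mrfZ (E \ b) φ ψ) + ∑ e ∈ b, psiU ψ e)
            ≤ ∑ b : Finset (V × V), p b * (L + ∑ e ∈ b, g e) :=
              Finset.sum_le_sum (fun b _ => hub b)
          _ = (∑ b : Finset (V × V), p b) * L +
              ∑ b : Finset (V × V), p b * ∑ e ∈ b, g e := by
              rw [Finset.sum_mul, ← Finset.sum_add_distrib]
              apply Finset.sum_congr rfl
              intro b _
              ring
          _ ≤ 1 * L + ε * (((dstar : ℝ) + 1) * L) := by
              rw [hp1]
              linarith
          _ = (1 + ε * ((dstar : ℝ) + 1)) * L := by ring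
    | · -- lower bound on the expectation of the LB estimate
        have hlb : ∀ b : Finset (V × V),
            p b * (L - ∑ e ∈ b, g e) ≤
            p b * (Real.log (mrfZ (E \ b) φ ψ) + ∑ e ∈ b, psiL ψ e) := by
          intro b
          by_cases hp : p b = 0
          · rw [hp, zero_mul, zero_mul]
          · apply mul_le_mul_of_nonneg_left _ (hp0 b)
            have hb : b ⊆ E := hsupp b hp
            have h1 := (hsand b hb).2
            have h2 : ∑ e ∈ b, g e = ∑ e ∈ b, psiU ψ e - ∑ e ∈ b, psiL ψ e := by
              rw [← Finset.sum_sub_distrib]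
            linarith
        calc (1 - ε * ((dstar : ℝ) + 1)) * L
            ≤ (∑ b : Finset (V × V), p b) * L -
              ∑ b : Finset (V × V), p b * ∑ e ∈ b, g e := by
              rw [hp1]
              linarith
          _ = ∑ b : Finset (V × V), p b * (L - ∑ e ∈ b, g e) := by
              rw [Finset.sum_mul, ← Finset.sum_sub_distrib]
              apply Finset.sum_congr rfl
              intro b _
              ring
          _ ≤ ∑ b : Finset (V × V),
              p b * (Real.log (mrfZ (E \ b) φ ψ) + ∑ e ∈ b, psiL ψ e) :=
              Finset.sum_le_sum (fun b _ => hlb b)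
  }
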